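/- Let A₁, A₂ ∈ ℝ^m be nonzero vectors with ⟨A₁, A₂⟩ ≥ 0, let c₁, c₂ ∈ ℝ, with halfspaces H₁, H₂ and projection operators Π₁, Π₂ as below. Then for every u ∈ ℝ^m, the sequentially projected point Π₁(Π₂(u)) lies in the intersection H₁ ∩ H₂; symmetrically, Π₂(Π₁(u)) ∈ H₁ ∩ H₂. That is, when the halfspace normals form a non-acute angle, sequential projection in either order yields a control feasible for both constraints. -/
import Mathlib

open scoped RealInnerProductSpace

/-- The closed-form halfspace projection operator. -/
noncomputable def halfspaceProj {m : ℕ} (A : EuclideanSpace ℝ (Fin m)) (c : ℝ)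
    (u : EuclideanSpace ℝ (Fin m)) : EuclideanSpace ℝ (Fin m) :=
  u + (max 0 (c - ⟪A, u⟫) / ‖A‖ ^ 2) • A

lemma proj_mem {m : ℕ} (A : EuclideanSpace ℝ (Fin m)) (hA : A ≠ 0) (c : ℝ)
    (u : EuclideanSpace ℝ (Fin m)) : ⟪A, halfspaceProj A c u⟫ ≥ c := by
  have hA' : ‖A‖ ≠ 0 := norm_ne_zero_iff.mpr hA
  have hn : ‖A‖ ^ 2 ≠ 0 := by positivity
  simp only [halfspaceProj, inner_add_right, real_inner_smul_right,
    real_inner_self_eq_norm_sq]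
  rw [div_mul_cancel₀ _ hn]
  have := le_max_right 0 (c - ⟪A, u⟫)
  linarith

lemma proj_mono {m : ℕ} (A B : EuclideanSpace ℝ (Fin m)) (hBA : ⟪B, A⟫ ≥ 0) (c : ℝ)
    (u : EuclideanSpace ℝ (Fin m)) : ⟪B, halfspaceProj A c u⟫ ≥ ⟪B, u⟫ := by
  simp only [halfspaceProj, inner_add_right, real_inner_smul_right]
  have h1 : (0:ℝ) ≤ max 0 (c - ⟪A, u⟫) / ‖A‖ ^ 2 := by positivity
  nlinarith

/-- if the two halfspace normals form a non-acute angle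
(`⟨A₁, A₂⟩ ≥ 0`), sequential projection in either order yields a control
feasible for both constraints. -/
theorem sequential_projection_two_constraints {m : ℕ}
    (A₁ A₂ : EuclideanSpace ℝ (Fin m)) (hA₁ : A₁ ≠ 0) (hA₂ : A₂ ≠ 0)
    (hcompat : ⟪A₁, A₂⟫ ≥ 0) (c₁ c₂ : ℝ)
    (H₁ H₂ : Set (EuclideanSpace ℝ (Fin m)))
    (hH₁ : H₁ = {v : EuclideanSpace ℝ (Fin m) | ⟪A₁, v⟫ ≥ c₁})
    (hH₂ : H₂ = {v : EuclideanSpace ℝ (Fin m) | ⟪A₂, v⟫ ≥ c₂})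
    (u : EuclideanSpace ℝ (Fin m)) :
    halfspaceProj A₁ c₁ (halfspaceProj A₂ c₂ u) ∈ H₁ ∩ H₂ ∧
      halfspaceProj A₂ c₂ (halfspaceProj A₁ c₁ u) ∈ H₁ ∩ H₂ := by
  have hsymm : ⟪A₂, A₁⟫ ≥ 0 := by rwa [real_inner_comm]
  subst hH₁ hH₂
  refine ⟨⟨proj_mem A₁ hA₁ c₁ _, ?_⟩, ⟨?_, proj_mem A₂ hA₂ c₂ _⟩⟩
  · exact le_trans (proj_mem A₂ hA₂ c₂ u) (proj_mono A₁ A₂ hsymm c₁ _)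
  · exact le_trans (proj_mem A₁ hA₁ c₁ u) (proj_mono A₂ A₁ hcompat c₂ _)
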